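/- Let G be a bipartite n-vertex graph with girth greater than 2m in which every vertex has degree between c₁·n^{1/m} and c₂·n^{1/m} (c₁, c₂ > 0, m ≥ 2, n sufficiently large). Fix a vertex x and let G_x be the subgraph induced by Γ^m(x) ∪ Γ^{m+1}(x). Then |Γ^m(x)| ≥ (c₁·n^{1/m} − 1)^m and e(G_x) ≥ |Γ^m(x)|·(c₁·n^{1/m} − 1); in particular, for n large, e(G_x) ≥ (c₁/2)^{m+1}·n^{1+1/m}. -/

import Mathlib

open SimpleGraph Real

def SimpleGraph.IsBip {V : Type*} (G : SimpleGraph V) : Prop :=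
  ∃ A : Set V, ∀ ⦃u v : V⦄, G.Adj u v → (u ∈ A ↔ v ∉ A)

section Aux

variable {V : Type} {G : SimpleGraph V}

private lemma walk_parity (A : Set V) (hA : ∀ ⦃u v : V⦄, G.Adj u v → (u ∈ A ↔ v ∉ A))
    {a b : V} (p : G.Walk a b) : (a ∈ A ↔ b ∈ A) ↔ Even p.length := by
  induction p with
  | nil => simp
  | @cons a c b h p ih =>
    rw [SimpleGraph.Walk.length_cons, Nat.even_add_one, ← ih]
    have := hA h
    tauto

private lemma no_level_edge (hbip : G.IsBip) {x u v : V} (hu : G.Reachable x u)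
    (hv : G.Reachable x v) (hd : G.dist x u = G.dist x v) : ¬ G.Adj u v := by
  obtain ⟨A, hA⟩ := hbip
  intro hadj
  obtain ⟨p, hp⟩ := hu.exists_walk_length_eq_dist
  obtain ⟨q, hq⟩ := hv.exists_walk_length_eq_dist
  have h1 := walk_parity A hA p
  have h2 := walk_parity A hA q
  rw [hp, hd] at h1
  rw [hq] at h2
  have := hA hadj
  tauto

private lemma dist_le_of_mem_support {u v w : V} (p : G.Walk u v) (hw : w ∈ p.support) :
    G.dist u w ≤ p.length := by
  obtain ⟨q, r, rfl⟩ := SimpleGraph.Walk.mem_support_iff_exists_append.mp hw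
  calc G.dist u w ≤ q.length := SimpleGraph.dist_le q
    _ ≤ (q.append r).length := by rw [SimpleGraph.Walk.length_append]; omega

/-- In a graph of girth `> 2m`, a vertex at distance `j+1 ≤ m` from `x` has at most one
neighbour at distance `j` from `x`. -/
private lemma unique_pred {m : ℕ} (hg : ((2 * m : ℕ) : ℕ∞) < G.egirth) {x w u₁ u₂ : V}
    {j : ℕ} (hjm : j + 1 ≤ m) (hw : G.dist x w = j + 1)
    (h1 : G.Adj w u₁) (h2 : G.Adj w u₂)
    (hr1 : G.Reachable x u₁) (hr2 : G.Reachable x u₂)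
    (hd1 : G.dist x u₁ = j) (hd2 : G.dist x u₂ = j) : u₁ = u₂ := by
  classical
  by_contra hne
  obtain ⟨p₁, hp₁⟩ := hr1.exists_walk_length_eq_dist
  obtain ⟨p₂, hp₂⟩ := hr2.exists_walk_length_eq_dist
  rw [hd1] at hp₁
  rw [hd2] at hp₂
  set W : G.Walk u₁ u₂ := p₁.reverse.append p₂ with hW
  have hwW : w ∉ W.support := by
    intro hmem
    rw [hW, SimpleGraph.Walk.mem_support_append_iff] at hmem
    rcases hmem with hmem | hmem
    · rw [SimpleGraph.Walk.support_reverse, List.mem_reverse] at hmem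
      have := dist_le_of_mem_support p₁ hmem
      omega
    · have := dist_le_of_mem_support p₂ hmem
      omega
  have hPpath : W.bypass.IsPath := SimpleGraph.Walk.bypass_isPath W
  have hwP : w ∉ W.bypass.support := fun hc => hwW (SimpleGraph.Walk.support_bypass_subset W hc)
  have hPlen : W.bypass.length ≤ 2 * j := by
    have h' := SimpleGraph.Walk.length_bypass_le W
    have hWlen : W.length = 2 * j := by
      rw [hW, SimpleGraph.Walk.length_append, SimpleGraph.Walk.length_reverse, hp₁, hp₂]
      omega
    omega
  have hQpath : (W.bypass.concat h2.symm).IsPath := by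
    rw [SimpleGraph.Walk.isPath_def, SimpleGraph.Walk.support_concat]
    rw [List.nodup_append]
    refine ⟨hPpath.support_nodup, List.nodup_singleton w, ?_⟩
    intro a ha b hb hab
    rw [List.mem_singleton] at hb
    subst hb
    exact hwP (hab ▸ ha)
  have hedge : s(w, u₁) ∉ (W.bypass.concat h2.symm).edges := by
    rw [SimpleGraph.Walk.edges_concat]
    intro hmem
    rw [List.concat_eq_append, List.mem_append, List.mem_singleton] at hmem
    rcases hmem with hmem | hmem
    · exact hwP (SimpleGraph.Walk.fst_mem_support_of_mem_edges W.bypass hmem)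
    · rw [Sym2.eq_iff] at hmem
      rcases hmem with ⟨-, h⟩ | ⟨-, h⟩
      · exact h1.ne' h
      · exact hne h
  have hcyc : (SimpleGraph.Walk.cons h1 (W.bypass.concat h2.symm)).IsCycle :=
    (SimpleGraph.Walk.cons_isCycle_iff (W.bypass.concat h2.symm) h1).mpr ⟨hQpath, hedge⟩
  have hclen : (SimpleGraph.Walk.cons h1 (W.bypass.concat h2.symm)).length ≤ 2 * m := by
    rw [SimpleGraph.Walk.length_cons, SimpleGraph.Walk.length_concat]
    omega
  have h1' : G.egirth ≤ ((SimpleGraph.Walk.cons h1 (W.bypass.concat h2.symm)).length : ℕ∞) :=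
    SimpleGraph.le_egirth.mp le_rfl w _ hcyc
  have h2' : ((SimpleGraph.Walk.cons h1 (W.bypass.concat h2.symm)).length : ℕ∞) ≤
      ((2 * m : ℕ) : ℕ∞) := by exact_mod_cast hclen
  exact absurd (h1'.trans h2') (not_le.mpr hg)

end Aux

/-- Let `G` be a bipartite `n`-vertex graph (`n` sufficiently large) with girth greater
than `2m` and all degrees between `c₁·n^{1/m}` and `c₂·n^{1/m}`. Fix a vertex `x` and
let `G_x` be the subgraph induced by `Γ^m(x) ∪ Γ^{m+1}(x)`. Then
`|Γ^m(x)| ≥ (c₁·n^{1/m} − 1)^m`, `e(G_x) ≥ |Γ^m(x)|·(c₁·n^{1/m} − 1)`, and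
`e(G_x) ≥ (c₁/2)^{m+1}·n^{1+1/m}`. -/
theorem induced_two_levels_many_edges (m : ℕ) (hm : 2 ≤ m) (c₁ c₂ : ℝ)
    (hc₁ : 0 < c₁) (hc₂ : 0 < c₂) :
    ∃ N : ℕ, ∀ (V : Type) [Fintype V] (G : SimpleGraph V) (n : ℕ),
      Fintype.card V = n → N ≤ n → G.IsBip → (2 * m : ℕ) < G.egirth →
      (∀ v : V, c₁ * (n : ℝ) ^ ((1 : ℝ) / m) ≤ ((G.neighborSet v).ncard : ℝ) ∧
        ((G.neighborSet v).ncard : ℝ) ≤ c₂ * (n : ℝ) ^ ((1 : ℝ) / m)) →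
      ∀ x : V,
        ((c₁ * (n : ℝ) ^ ((1 : ℝ) / m) - 1) ^ m
            ≤ (({v : V | G.Reachable x v ∧ G.dist x v = m} : Set V).ncard : ℝ)) ∧
        ((({v : V | G.Reachable x v ∧ G.dist x v = m} : Set V).ncard : ℝ)
              * (c₁ * (n : ℝ) ^ ((1 : ℝ) / m) - 1)
            ≤ ((G.induce {v : V | G.Reachable x v ∧
                (G.dist x v = m ∨ G.dist x v = m + 1)}).edgeSet.ncard : ℝ)) ∧
        ((c₁ / 2) ^ (m + 1) * (n : ℝ) ^ ((1 : ℝ) + 1 / m)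
            ≤ ((G.induce {v : V | G.Reachable x v ∧
                (G.dist x v = m ∨ G.dist x v = m + 1)}).edgeSet.ncard : ℝ)) := by
  classical
  refine ⟨max 1 ⌈(2 / c₁) ^ m⌉₊, ?_⟩
  intro V _ G n hcard hn hbip hgirth hdeg x
  classical
  have hm0 : (m : ℝ) ≠ 0 := Nat.cast_ne_zero.mpr (by omega)
  set δ : ℝ := c₁ * (n : ℝ) ^ ((1 : ℝ) / m) with hδ
  -- δ ≥ 2
  have hn1 : 1 ≤ n := le_trans (le_max_left _ _) hn
  have hnR : ((2 / c₁) ^ m : ℝ) ≤ (n : ℝ) := by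
    have := Nat.ceil_le.mp (le_trans (le_max_right 1 ⌈(2 / c₁) ^ m⌉₊) hn)
    exact_mod_cast this
  have hδ2 : (2 : ℝ) ≤ δ := by
    have h2c : (0 : ℝ) ≤ 2 / c₁ := by positivity
    have hroot : (2 / c₁ : ℝ) ≤ (n : ℝ) ^ ((1 : ℝ) / m) := by
      have h1 : ((2 / c₁ : ℝ) ^ m) ^ ((1 : ℝ) / m) ≤ (n : ℝ) ^ ((1 : ℝ) / m) :=
        Real.rpow_le_rpow (by positivity) hnR (by positivity)
      rwa [← Real.rpow_natCast (2 / c₁) m, ← Real.rpow_mul h2c,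
        mul_one_div, div_self hm0, Real.rpow_one] at h1
    calc (2 : ℝ) = c₁ * (2 / c₁) := by field_simp
      _ ≤ c₁ * (n : ℝ) ^ ((1 : ℝ) / m) := by
          exact mul_le_mul_of_nonneg_left hroot hc₁.le
  have hδ1 : (1 : ℝ) ≤ δ - 1 := by linarith
  have hδ0 : (0 : ℝ) ≤ δ - 1 := by linarith
  -- degree lower bound with neighborFinset
  have hdegF : ∀ v : V, δ ≤ ((G.neighborFinset v).card : ℝ) := by
    intro v
    have h1 := (hdeg v).1
    rwa [← Nat.card_coe_set_eq, Nat.card_eq_fintype_card,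
      SimpleGraph.card_neighborSet_eq_degree, SimpleGraph.degree] at h1
  -- the level sets
  set L : ℕ → Finset V := fun k =>
    Finset.univ.filter (fun v => G.Reachable x v ∧ G.dist x v = k) with hL
  have hmemL : ∀ k (v : V), v ∈ L k ↔ G.Reachable x v ∧ G.dist x v = k := by
    intro k v; simp [hL]
  -- neighbours of a vertex in level k+1 lie in levels k and k+2,
  -- with at most one in level k
  have hlow : ∀ (j : ℕ), j + 1 ≤ m → ∀ v ∈ L (j + 1),
      ((G.neighborFinset v).filter (fun u => u ∈ L j)).card ≤ 1 := by
    intro j hjm v hv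
    rw [hmemL] at hv
    refine Finset.card_le_one.mpr ?_
    intro a ha b hb
    rw [Finset.mem_filter, SimpleGraph.mem_neighborFinset, hmemL] at ha hb
    exact unique_pred hgirth hjm hv.2 ha.1 hb.1 ha.2.1 hb.2.1 ha.2.2 hb.2.2
  -- each vertex of level k (1 ≤ k ≤ m) has ≥ deg - 1 neighbours in level k+1
  have hup : ∀ (j : ℕ), j + 1 ≤ m → ∀ v ∈ L (j + 1),
      (G.neighborFinset v).card ≤
        ((G.neighborFinset v).filter (fun u => u ∈ L (j + 2))).card + 1 := by
    intro j hjm v hv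
    rw [hmemL] at hv
    obtain ⟨hvr, hvd⟩ := hv
    have hsub : G.neighborFinset v ⊆
        ((G.neighborFinset v).filter (fun u => u ∈ L (j + 2))) ∪
        ((G.neighborFinset v).filter (fun u => u ∈ L j)) := by
      intro u hu
      rw [SimpleGraph.mem_neighborFinset] at hu
      have hur : G.Reachable x u := hvr.trans hu.reachable
      have hle1 : G.dist x u ≤ j + 2 := by
        obtain ⟨p, hp⟩ := hvr.exists_walk_length_eq_dist
        have := SimpleGraph.dist_le (p.concat hu)
        rw [SimpleGraph.Walk.length_concat, hp, hvd] at this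
        omega
      have hge1 : j ≤ G.dist x u := by
        obtain ⟨p, hp⟩ := hur.exists_walk_length_eq_dist
        have := SimpleGraph.dist_le (p.concat hu.symm)
        rw [SimpleGraph.Walk.length_concat, hp, hvd] at this
        omega
      have hne : G.dist x u ≠ j + 1 := by
        intro hc
        exact no_level_edge hbip hvr hur (by omega : G.dist x v = G.dist x u) hu
      have : G.dist x u = j ∨ G.dist x u = j + 2 := by omega
      simp only [Finset.mem_union, Finset.mem_filter, SimpleGraph.mem_neighborFinset, hmemL]
      rcases this with h | h
      · exact Or.inr ⟨hu, hur, h⟩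
      · exact Or.inl ⟨hu, hur, h⟩
    calc (G.neighborFinset v).card ≤ _ := Finset.card_le_card hsub
      _ ≤ ((G.neighborFinset v).filter (fun u => u ∈ L (j + 2))).card +
          ((G.neighborFinset v).filter (fun u => u ∈ L j)).card := Finset.card_union_le _ _
      _ ≤ _ := by
          have := hlow j hjm v (by rw [hmemL]; exact ⟨hvr, hvd⟩)
          omega
  -- double counting between consecutive levels
  have hdc : ∀ (k : ℕ),
      (∑ v ∈ L k, ((L (k + 1)).filter (fun u => G.Adj v u)).card) =
      ∑ w ∈ L (k + 1), ((L k).filter (fun u => G.Adj w u)).card := by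
    intro k
    simp only [Finset.card_filter]
    rw [Finset.sum_comm]
    refine Finset.sum_congr rfl fun w _ => Finset.sum_congr rfl fun v _ => ?_
    simp [SimpleGraph.adj_comm]
  -- filter over neighborFinset vs over level
  have hfilt : ∀ (k l : ℕ), ∀ v : V,
      ((G.neighborFinset v).filter (fun u => u ∈ L l)).card =
      ((L l).filter (fun u => G.Adj v u)).card := by
    intro k l v
    congr 1
    ext u
    simp [SimpleGraph.mem_neighborFinset, and_comm]
  -- lower bound for edges from level j+1 up: sum version
  have hsum : ∀ (j : ℕ), j + 1 ≤ m →
      ((L (j + 1)).card : ℝ) * (δ - 1) ≤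
        (∑ v ∈ L (j + 1), ((L (j + 2)).filter (fun u => G.Adj v u)).card : ℕ) := by
    intro j hjm
    push_cast
    rw [Finset.card_eq_sum_ones (L (j + 1))]
    push_cast
    rw [Finset.sum_mul]
    refine Finset.sum_le_sum fun v hv => ?_
    have h1 := hup j hjm v hv
    rw [hfilt (j + 1) (j + 2) v] at h1
    have h2 := hdegF v
    have h3 : (((G.neighborFinset v).card : ℝ)) ≤
        (((L (j + 2)).filter (fun u => G.Adj v u)).card : ℝ) + 1 := by exact_mod_cast h1
    linarith
  -- expansion
  have hexp : ∀ (j : ℕ), j + 2 ≤ m →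
      ((L (j + 1)).card : ℝ) * (δ - 1) ≤ ((L (j + 2)).card : ℝ) := by
    intro j hjm
    refine le_trans (hsum j (by omega)) ?_
    rw [hdc (j + 1)]
    have h1 : (∑ w ∈ L (j + 2), ((L (j + 1)).filter (fun u => G.Adj w u)).card) ≤
        ∑ w ∈ L (j + 2), 1 := by
      refine Finset.sum_le_sum fun w hw => ?_
      have := hlow (j + 1) hjm w hw
      rw [hfilt (j + 2) (j + 1) w] at this
      exact this
    rw [Finset.sum_const, smul_eq_mul, mul_one] at h1
    exact_mod_cast h1
  -- base : level 1
  have hL1 : δ ≤ ((L 1).card : ℝ) := by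
    have : L 1 = G.neighborFinset x := by
      ext v
      rw [hmemL, SimpleGraph.mem_neighborFinset]
      constructor
      · rintro ⟨-, hd⟩; exact SimpleGraph.dist_eq_one_iff_adj.mp hd
      · intro h; exact ⟨h.reachable, SimpleGraph.dist_eq_one_iff_adj.mpr h⟩
    rw [this]
    exact hdegF x
  -- levels grow like (δ-1)^k
  have hgrow : ∀ k : ℕ, 1 ≤ k → k ≤ m → (δ - 1) ^ k ≤ ((L k).card : ℝ) := by
    intro k hk1 hkm
    induction k with
    | zero => omega
    | succ k ih =>
      rcases Nat.eq_or_lt_of_le hk1 with h | h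
      · rw [← h]
        rw [pow_one]
        linarith [hL1]
      · have hk1' : 1 ≤ k := by omega
        have hkm' : k ≤ m := by omega
        have ihk := ih hk1' hkm'
        obtain ⟨j, rfl⟩ : ∃ j, k = j + 1 := ⟨k - 1, by omega⟩
        have hstep := hexp j (by omega)
        calc (δ - 1) ^ (j + 1 + 1) = (δ - 1) ^ (j + 1) * (δ - 1) := by ring
          _ ≤ ((L (j + 1)).card : ℝ) * (δ - 1) := by
              exact mul_le_mul_of_nonneg_right ihk hδ0
          _ ≤ _ := hstep
  have hLm : (δ - 1) ^ m ≤ ((L m).card : ℝ) := hgrow m (by omega) le_rfl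
  -- identify the set with the Finset
  have hset1 : ({v : V | G.Reachable x v ∧ G.dist x v = m} : Set V) = ↑(L m) := by
    ext v; simp [hmemL]
  have hncard1 : (({v : V | G.Reachable x v ∧ G.dist x v = m} : Set V).ncard) = (L m).card := by
    rw [hset1, Set.ncard_coe_finset]
  -- edge counting
  set S : Set V := {v : V | G.Reachable x v ∧ (G.dist x v = m ∨ G.dist x v = m + 1)} with hS
  set H : Set (Sym2 ↑S) := (G.induce S).edgeSet with hH
  set P : Finset (V × V) := ((L m) ×ˢ (L (m + 1))).filter (fun p => G.Adj p.1 p.2) with hPdef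
  have hPcard : ∀ p ∈ P, p.1 ∈ L m ∧ p.2 ∈ L (m + 1) ∧ G.Adj p.1 p.2 := by
    intro p hp
    rw [hPdef, Finset.mem_filter, Finset.mem_product] at hp
    exact ⟨hp.1.1, hp.1.2, hp.2⟩
  have hPS : ∀ p ∈ P, p.1 ∈ S ∧ p.2 ∈ S := by
    intro p hp
    obtain ⟨h1, h2, -⟩ := hPcard p hp
    rw [hmemL] at h1 h2
    exact ⟨⟨h1.1, Or.inl h1.2⟩, ⟨h2.1, Or.inr h2.2⟩⟩
  -- map pairs to edges of the whole graph
  have hinj : Set.InjOn (fun p : V × V => s(p.1, p.2)) ↑P := by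
    intro p hp q hq hpq
    rw [Finset.mem_coe] at hp hq
    obtain ⟨hp1, hp2, -⟩ := hPcard p hp
    obtain ⟨hq1, hq2, -⟩ := hPcard q hq
    rw [hmemL] at hp1 hp2 hq1 hq2
    simp only [Sym2.eq_iff] at hpq
    rcases hpq with ⟨h1, h2⟩ | ⟨h1, h2⟩
    · exact Prod.ext h1 h2
    · exfalso
      have := hp1.2
      rw [h1] at this
      rw [hq2.2] at this
      omega
  have himg : (fun p : V × V => s(p.1, p.2)) '' ↑P ⊆ (Sym2.map (Subtype.val : ↑S → V)) '' H := by
    rintro e ⟨p, hp, rfl⟩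
    rw [Finset.mem_coe] at hp
    obtain ⟨hS1, hS2⟩ := hPS p hp
    obtain ⟨-, -, hadj⟩ := hPcard p hp
    refine ⟨s(⟨p.1, hS1⟩, ⟨p.2, hS2⟩), ?_, ?_⟩
    · rw [hH, SimpleGraph.mem_edgeSet]
      exact hadj
    · simp [Sym2.map_pair_eq]
  have hHfin : H.Finite := Set.toFinite H
  have hecard : (P.card : ℝ) ≤ (H.ncard : ℝ) := by
    have h1 : ((↑P : Set (V × V)).ncard) = P.card := Set.ncard_coe_finset P
    have h2 : ((fun p : V × V => s(p.1, p.2)) '' ↑P).ncard = (↑P : Set (V × V)).ncard :=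
      Set.ncard_image_of_injOn hinj
    have h3 : ((Sym2.map (Subtype.val : ↑S → V)) '' H).ncard = H.ncard :=
      Set.ncard_image_of_injective H (Sym2.map.injective Subtype.coe_injective)
    have h4 : ((fun p : V × V => s(p.1, p.2)) '' ↑P).ncard ≤
        ((Sym2.map (Subtype.val : ↑S → V)) '' H).ncard :=
      Set.ncard_le_ncard himg (Set.toFinite _)
    have : P.card ≤ H.ncard := by omega
    exact_mod_cast this
  -- P.card as a sum
  have hPsum : P.card = ∑ v ∈ L m, ((L (m + 1)).filter (fun u => G.Adj v u)).card := by
    rw [hPdef]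
    rw [Finset.card_filter, Finset.sum_product]
    simp only [Finset.card_filter]
  -- second bullet
  have hedges : ((L m).card : ℝ) * (δ - 1) ≤ (H.ncard : ℝ) := by
    refine le_trans ?_ hecard
    rw [hPsum]
    obtain ⟨j, rfl⟩ : ∃ j, m = j + 1 := ⟨m - 1, by omega⟩
    exact hsum j le_rfl
  have hmain2 : ((({v : V | G.Reachable x v ∧ G.dist x v = m} : Set V).ncard : ℝ)
      * (δ - 1) ≤ (H.ncard : ℝ)) := by
    rw [hncard1]; exact hedges
  -- third bullet
  have hpow : (δ - 1) ^ (m + 1) ≤ (H.ncard : ℝ) := by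
    calc (δ - 1) ^ (m + 1) = (δ - 1) ^ m * (δ - 1) := by ring
      _ ≤ ((L m).card : ℝ) * (δ - 1) := mul_le_mul_of_nonneg_right hLm hδ0
      _ ≤ _ := hedges
  have hhalf : (c₁ / 2) ^ (m + 1) * (n : ℝ) ^ ((1 : ℝ) + 1 / m) ≤ (δ - 1) ^ (m + 1) := by
    have hδhalf : δ / 2 ≤ δ - 1 := by linarith
    have hnn : (0 : ℝ) ≤ δ / 2 := by linarith
    have h1 : (δ / 2) ^ (m + 1) ≤ (δ - 1) ^ (m + 1) := pow_le_pow_left₀ hnn hδhalf (m + 1)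
    refine le_trans (le_of_eq ?_) h1
    rw [hδ]
    have hnn2 : (0 : ℝ) ≤ (n : ℝ) := Nat.cast_nonneg n
    have hrw : ((n : ℝ) ^ ((1 : ℝ) / m)) ^ (m + 1) = (n : ℝ) ^ ((1 : ℝ) + 1 / m) := by
      rw [← Real.rpow_natCast ((n : ℝ) ^ ((1 : ℝ) / m)) (m + 1), ← Real.rpow_mul hnn2]
      congr 1
      push_cast
      field_simp
    calc (c₁ / 2) ^ (m + 1) * (n : ℝ) ^ ((1 : ℝ) + 1 / m)
        = (c₁ / 2) ^ (m + 1) * ((n : ℝ) ^ ((1 : ℝ) / m)) ^ (m + 1) := by rw [hrw]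
      _ = (c₁ / 2 * (n : ℝ) ^ ((1 : ℝ) / m)) ^ (m + 1) := by rw [mul_pow]
      _ = (c₁ * (n : ℝ) ^ ((1 : ℝ) / m) / 2) ^ (m + 1) := by ring_nf
  refine ⟨by rw [hncard1]; exact hLm, hmain2, le_trans hhalf hpow⟩
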